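/- Let X = (X, T, μ_X), Y = (Y, S, μ_Y) and Z = (Z, R, μ_Z) be G systems and suppose Y is a factor of X, i.e., there exists a factor map π : X → Y. If X and Z are quasi-disjoint, then Y and Z are quasi-disjoint. -/

import Mathlib

open MeasureTheory Filter Topology

section Defs

variable {G : Type*} [Group G] {X Y : Type*} [MeasurableSpace X] [MeasurableSpace Y]

/-- A joining of two `G` systems: a probability measure on the product which is invariant
under the diagonal action and has the two given measures as marginals. -/
def IsJoining (T : G → X → X) (S : G → Y → Y) (μX : Measure X) (μY : Measure Y)
    (ν : Measure (X × Y)) : Prop :=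
  IsProbabilityMeasure ν ∧
    (∀ g : G, MeasurePreserving (fun p : X × Y => (T g p.1, S g p.2)) ν ν) ∧
    ν.map Prod.fst = μX ∧ ν.map Prod.snd = μY

/-- `f ∈ L²(X, μ)` is almost periodic if the orbit `{f ∘ T^g : g ∈ G}` has compact closure
in the norm topology of `L²(X, μ)`. -/
def AlmostPeriodic (T : G → X → X) (μ : Measure X) (f : Lp ℂ 2 μ) : Prop :=
  IsCompact (closure {h : Lp ℂ 2 μ | ∃ g : G, (h : X → ℂ) =ᵐ[μ] fun x => f (T g x)})

/-- The joining `ν` projects to the product measure on the product of the Kronecker factors: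
almost periodic functions of the two systems are uncorrelated under `ν`. -/
def ProjectsToKroneckerProduct (T : G → X → X) (S : G → Y → Y) (μX : Measure X)
    (μY : Measure Y) (ν : Measure (X × Y)) : Prop :=
  ∀ (f : Lp ℂ 2 μX) (h : Lp ℂ 2 μY), AlmostPeriodic T μX f → AlmostPeriodic S μY h →
    ∫ p, f p.1 * h p.2 ∂ν = (∫ x, f x ∂μX) * (∫ y, h y ∂μY)

/-- Two `G` systems are quasi-disjoint if the only joining projecting to the product measure
on the product of the Kronecker factors is the product measure. -/
def QuasiDisjoint (T : G → X → X) (S : G → Y → Y) (μX : Measure X) (μY : Measure Y) : Prop :=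
  ∀ ν : Measure (X × Y), IsJoining T S μX μY ν →
    ProjectsToKroneckerProduct T S μX μY ν → ν = μX.prod μY

/-- Two `G` systems are disjoint if the product measure is their only joining. -/
def DisjointSystems (T : G → X → X) (S : G → Y → Y) (μX : Measure X) (μY : Measure Y) : Prop :=
  ∀ ν : Measure (X × Y), IsJoining T S μX μY ν → ν = μX.prod μY

/-- Two `G` systems are Kronecker disjoint if every joining projects to the product measure
on the product of the Kronecker factors. -/
def KroneckerDisjoint (T : G → X → X) (S : G → Y → Y) (μX : Measure X) (μY : Measure Y) :
    Prop :=
  ∀ ν : Measure (X × Y), IsJoining T S μX μY ν → ProjectsToKroneckerProduct T S μX μY ν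

/-- A separating sieve for the system `(X, T, μ)`. -/
def HasSeparatingSieve (T : G → X → X) (μ : Measure X) : Prop :=
  ∃ A : ℕ → Set X, (∀ n, MeasurableSet (A n)) ∧ (∀ n, 0 < μ (A n)) ∧
    Tendsto (fun n => μ (A n)) atTop (𝓝 0) ∧
    ∃ X' : Set X, μ X'ᶜ = 0 ∧
      ∀ x ∈ X', ∀ x' ∈ X', (∀ n : ℕ, ∃ g : G, T g x ∈ A n ∧ T g x' ∈ A n) → x = x'

/-- A factor map of `G` systems: a measurable, almost everywhere `G`-equivariant map
pushing `μX` forward to `μY`. -/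
def IsFactorMap (T : G → X → X) (S : G → Y → Y) (μX : Measure X) (μY : Measure Y)
    (π : X → Y) : Prop :=
  Measurable π ∧ μX.map π = μY ∧ ∀ g : G, ∀ᵐ x ∂μX, π (T g x) = S g (π x)

/-- Ergodicity of a `G` system: every invariant Borel set is null or conull. -/
def ErgodicSystem (T : G → X → X) (μ : Measure X) : Prop :=
  ∀ A : Set X, MeasurableSet A → (∀ g : G, T g ⁻¹' A = A) → μ A = 0 ∨ μ A = 1

end Defs

/-!
A joining `ν` of `Y` and `Z` that is trivial on the Kronecker factors is lifted to the
relatively independent joining `λ = ∫ δ_x ⊗ ν_{π x} dμX(x)` of `X` and `Z`, where `y ↦ ν_y` is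
the disintegration of `ν` over `Y`. Uniqueness of disintegrations makes `y ↦ ν_y` equivariant, so
`λ` is invariant, and `(π × id)_* λ = ν`. For `f ∈ L²(X)`,
`∫ f ⊗ h dλ = ∫ E(f | Y) ⊗ h dν`, and `E(f | Y)` is almost periodic whenever `f` is, because
conditional expectation is continuous and commutes with the Koopman representations. So `λ` is
trivial on the Kronecker factors, hence `λ = μX ⊗ μZ` by quasi-disjointness, and
`ν = (π × id)_* λ = μY ⊗ μZ`.
-/

open ProbabilityTheory ComplexConjugate

namespace ContinuousLinearMap

variable {𝕜 E F : Type*} [RCLike 𝕜] [NormedAddCommGroup E] [InnerProductSpace 𝕜 E] [CompleteSpace E]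
  [NormedAddCommGroup F] [InnerProductSpace 𝕜 F] [CompleteSpace F]

theorem adjoint_apply_map_of_intertwines (Φ : F →L[𝕜] E) (U : E →ₗᵢ[𝕜] E) (V : F →ₗᵢ[𝕜] F)
    (hV : Function.Surjective V) (hΦ : ∀ k, Φ (V k) = U (Φ k)) (f : E) :
    adjoint Φ (U f) = V (adjoint Φ f) := by
  refine ext_inner_right 𝕜 fun k => ?_
  obtain ⟨k, rfl⟩ := hV k
  rw [adjoint_inner_left, hΦ, U.inner_map_map, V.inner_map_map, adjoint_inner_left]

end ContinuousLinearMap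

namespace MeasureTheory.Lp

variable {α β : Type*} [MeasurableSpace α] [MeasurableSpace β] {μ : Measure α} {ν : Measure β}

theorem compMeasurePreserving_surjective {E : Type*} [NormedAddCommGroup E] {p : ENNReal}
    (e : α ≃ᵐ β) (he : MeasurePreserving e μ ν) :
    Function.Surjective (compMeasurePreserving (E := E) (p := p) e he) := fun k =>
  ⟨compMeasurePreserving e.symm he.symm k, by
    rw [← compMeasurePreserving_comp_apply]
    simp⟩

theorem star_compMeasurePreserving {E : Type*} [NormedAddCommGroup E] [StarAddMonoid E]
    [NormedStarGroup E] {p : ENNReal} {π : α → β} (hπ : MeasurePreserving π μ ν) (k : Lp E p ν) :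
    star (compMeasurePreserving π hπ k) = compMeasurePreserving π hπ (star k) := by
  refine Lp.ext ?_
  filter_upwards [coeFn_star (compMeasurePreserving π hπ k), coeFn_compMeasurePreserving k hπ,
    coeFn_compMeasurePreserving (star k) hπ, hπ.quasiMeasurePreserving.ae (coeFn_star k)]
    with x h₁ h₂ h₃ h₄
  simp only [h₁, h₃, Pi.star_apply, h₂, Function.comp_apply, h₄]

theorem integral_mul_eq_conj_inner_star (f g : Lp ℂ 2 μ) :
    ∫ x, f x * g x ∂μ = conj (inner ℂ f (star g)) := by
  rw [L2.inner_def, ← integral_conj]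
  refine integral_congr_ae ?_
  filter_upwards [coeFn_star g] with x hx
  simp [hx, mul_comm]

end MeasureTheory.Lp

section FactorCondExp

variable {α β : Type*} [MeasurableSpace α] [MeasurableSpace β] {μ : Measure α} {ν : Measure β}

/-- The adjoint of `g ↦ g ∘ π`; it is the conditional expectation onto the factor `β`. -/
noncomputable def factorCondExp (π : α → β) (hπ : MeasurePreserving π μ ν) :
    Lp ℂ 2 μ →L[ℂ] Lp ℂ 2 ν :=
  ContinuousLinearMap.adjoint (Lp.compMeasurePreservingₗᵢ ℂ π hπ).toContinuousLinearMap

variable {π : α → β} (hπ : MeasurePreserving π μ ν)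

theorem integral_mul_comp_eq_integral_factorCondExp_mul (f : Lp ℂ 2 μ) (H : Lp ℂ 2 ν) :
    ∫ x, f x * H (π x) ∂μ = ∫ y, factorCondExp π hπ f y * H y ∂ν := by
  have hH : (fun x => H (π x)) =ᵐ[μ] Lp.compMeasurePreserving π hπ H :=
    (Lp.coeFn_compMeasurePreserving H hπ).symm
  rw [integral_congr_ae (hH.mono fun x hx => congrArg (f x * ·) hx),
    Lp.integral_mul_eq_conj_inner_star, Lp.integral_mul_eq_conj_inner_star,
    Lp.star_compMeasurePreserving, factorCondExp, ContinuousLinearMap.adjoint_inner_left]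
  rfl

theorem integral_factorCondExp [IsFiniteMeasure ν] (f : Lp ℂ 2 μ) :
    ∫ y, factorCondExp π hπ f y ∂ν = ∫ x, f x ∂μ := by
  set one : Lp ℂ 2 ν := (memLp_const 1).toLp fun _ => 1
  have h1 : (one : β → ℂ) =ᵐ[ν] 1 := MemLp.coeFn_toLp _
  calc ∫ y, factorCondExp π hπ f y ∂ν = ∫ y, factorCondExp π hπ f y * one y ∂ν :=
        integral_congr_ae (h1.mono fun y hy => by simp only [hy, Pi.one_apply, mul_one])
    _ = ∫ x, f x * one (π x) ∂μ := (integral_mul_comp_eq_integral_factorCondExp_mul hπ f one).symm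
    _ = ∫ x, f x ∂μ := integral_congr_ae
        ((hπ.quasiMeasurePreserving.ae h1).mono fun x hx => by
          simp only [hx, Pi.one_apply, mul_one])

theorem factorCondExp_compMeasurePreserving {t : α → α} (ht : MeasurePreserving t μ μ)
    (s : β ≃ᵐ β) (hs : MeasurePreserving s ν ν) (hπt : ∀ᵐ x ∂μ, π (t x) = s (π x))
    (f : Lp ℂ 2 μ) :
    factorCondExp π hπ (Lp.compMeasurePreserving t ht f)
      = Lp.compMeasurePreserving s hs (factorCondExp π hπ f) := by
  set Φ := (Lp.compMeasurePreservingₗᵢ (E := ℂ) (p := 2) ℂ π hπ).toContinuousLinearMap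
  set U := Lp.compMeasurePreservingₗᵢ (E := ℂ) (p := 2) ℂ t ht
  set V := Lp.compMeasurePreservingₗᵢ (E := ℂ) (p := 2) ℂ s hs
  have hΦ (k : Lp ℂ 2 ν) : Φ (V k) = U (Φ k) := by
    change Lp.compMeasurePreserving π hπ (Lp.compMeasurePreserving s hs k)
      = Lp.compMeasurePreserving t ht (Lp.compMeasurePreserving π hπ k)
    refine Lp.ext ?_
    filter_upwards [Lp.coeFn_compMeasurePreserving (Lp.compMeasurePreserving s hs k) hπ,
      hπ.quasiMeasurePreserving.ae (Lp.coeFn_compMeasurePreserving k hs),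
      Lp.coeFn_compMeasurePreserving (Lp.compMeasurePreserving π hπ k) ht,
      ht.quasiMeasurePreserving.ae (Lp.coeFn_compMeasurePreserving k hπ), hπt]
      with x h₁ h₂ h₃ h₄ h₅
    simp only [h₁, h₂, h₃, h₄, h₅, Function.comp_apply]
  exact ContinuousLinearMap.adjoint_apply_map_of_intertwines Φ U V
    (Lp.compMeasurePreserving_surjective s hs) hΦ f

end FactorCondExp

section AlmostPeriodic

variable {G α β : Type*} [MeasurableSpace α] [MeasurableSpace β]
  {μ : Measure α} {ν : Measure β}

theorem almostPeriodic_iff_isCompact_closure_range {T : G → α → α}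
    (hT : ∀ g, MeasurePreserving (T g) μ μ) (f : Lp ℂ 2 μ) :
    AlmostPeriodic T μ f ↔
      IsCompact (closure (Set.range fun g => Lp.compMeasurePreserving (T g) (hT g) f)) := by
  have horbit : {h : Lp ℂ 2 μ | ∃ g : G, (h : α → ℂ) =ᵐ[μ] fun x => f (T g x)}
      = Set.range fun g => Lp.compMeasurePreserving (T g) (hT g) f := by
    ext h
    refine exists_congr fun g => ⟨fun hg => ?_, fun hg => ?_⟩
    · exact Lp.ext ((Lp.coeFn_compMeasurePreserving f (hT g)).trans hg.symm)
    · exact hg ▸ Lp.coeFn_compMeasurePreserving f (hT g)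
  rw [AlmostPeriodic, horbit]

theorem AlmostPeriodic.map_of_intertwines {T : G → α → α} {S : G → β → β}
    (hT : ∀ g, MeasurePreserving (T g) μ μ) (hS : ∀ g, MeasurePreserving (S g) ν ν)
    {Q : Lp ℂ 2 μ → Lp ℂ 2 ν} (hQ : Continuous Q)
    (hQT : ∀ g f, Q (Lp.compMeasurePreserving (T g) (hT g) f)
      = Lp.compMeasurePreserving (S g) (hS g) (Q f))
    {f : Lp ℂ 2 μ} (hf : AlmostPeriodic T μ f) : AlmostPeriodic S ν (Q f) := by
  rw [almostPeriodic_iff_isCompact_closure_range hT] at hf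
  rw [almostPeriodic_iff_isCompact_closure_range hS]
  refine (hf.image hQ).closure_of_subset ?_
  rintro _ ⟨g, rfl⟩
  exact ⟨_, subset_closure ⟨g, rfl⟩, hQT g f⟩

end AlmostPeriodic

section CondKernel

variable {α Ω : Type*} [MeasurableSpace α] [MeasurableSpace Ω] {ν : Measure (α × Ω)}

theorem measurePreserving_fst_of_map_prodMap_eq {e : α → α} {r : Ω → Ω}
    (he : Measurable e) (hr : Measurable r) (hν : ν.map (Prod.map e r) = ν) :
    MeasurePreserving e ν.fst ν.fst := by
  refine ⟨he, ?_⟩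
  conv_rhs => rw [← hν]
  rw [Measure.fst, Measure.fst, Measure.map_map he measurable_fst,
    Measure.map_map measurable_fst (he.prodMap hr)]
  rfl

variable [StandardBorelSpace Ω] [Nonempty Ω] [IsFiniteMeasure ν]

theorem ae_condKernel_apply_eq_map (e : α ≃ᵐ α) (r : Ω ≃ᵐ Ω) (hν : ν.map (Prod.map e r) = ν) :
    ∀ᵐ a ∂ν.fst, ν.condKernel (e a) = (ν.condKernel a).map r := by
  have he := measurePreserving_fst_of_map_prodMap_eq e.measurable r.measurable hν
  have hν_symm : ν.map (Prod.map e.symm r.symm) = ν := by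
    conv_lhs => rw [← hν]
    rw [Measure.map_map (e.symm.measurable.prodMap r.symm.measurable)
        (e.measurable.prodMap r.measurable), Prod.map_comp_map, e.symm_comp_self, r.symm_comp_self, Prod.map_id, Measure.map_id]
  have hdisint : ν = ν.fst ⊗ₘ (ν.condKernel.comap e e.measurable).map r.symm := by
    refine Measure.ext_prod fun {A B} hA hB => ?_
    rw [Measure.compProd_apply_prod hA hB]
    calc ν (A ×ˢ B) = ν ((e.symm ⁻¹' A) ×ˢ (r.symm ⁻¹' B)) := by
          conv_lhs => rw [← hν_symm]
          rw [Measure.map_apply (e.symm.measurable.prodMap r.symm.measurable) (hA.prod hB)]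
          rfl
      _ = ∫⁻ a in e.symm ⁻¹' A, ν.condKernel a (r.symm ⁻¹' B) ∂ν.fst :=
          (ν.setLIntegral_condKernel_eq_measure_prod (e.symm.measurable hA)
            (r.symm.measurable hB)).symm
      _ = ∫⁻ a in A, ν.condKernel (e a) (r.symm ⁻¹' B) ∂ν.fst := by
          rw [← e.image_eq_preimage_symm]
          exact (he.setLIntegral_comp_emb e.measurableEmbedding _ A).symm
      _ = ∫⁻ a in A, (ν.condKernel.comap e e.measurable).map r.symm a B ∂ν.fst := by
          simp only [Kernel.map_apply' _ r.symm.measurable _ hB, Kernel.comap_apply]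
  filter_upwards [eq_condKernel_of_measure_eq_compProd _ hdisint] with a ha
  rw [← ha, Kernel.map_apply _ r.symm.measurable, Kernel.comap_apply,
    Measure.map_map r.measurable r.symm.measurable, r.self_comp_symm, Measure.map_id]

end CondKernel

theorem memLp_two_integral_kernel {β γ : Type*} [MeasurableSpace β] [MeasurableSpace γ]
    {μ : Measure β} [SFinite μ] (κ : Kernel β γ) [IsMarkovKernel κ] {h : γ → ℂ}
    (hm : StronglyMeasurable h) (hh : MemLp (fun p : β × γ => h p.2) 2 (μ ⊗ₘ κ)) :
    MemLp (fun y => ∫ z, h z ∂κ y) 2 μ := by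
  have jensen (y : β) : ‖∫ z, h z ∂κ y‖ₑ ^ (2 : ℝ) ≤ ∫⁻ z, ‖h z‖ₑ ^ (2 : ℝ) ∂κ y := by
    have h12 : ‖∫ z, h z ∂κ y‖ₑ ≤ eLpNorm h 2 (κ y) := by
      refine (enorm_integral_le_lintegral_enorm h).trans ?_
      rw [← eLpNorm_one_eq_lintegral_enorm]
      exact eLpNorm_le_eLpNorm_of_exponent_le one_le_two hm.aestronglyMeasurable
    calc ‖∫ z, h z ∂κ y‖ₑ ^ (2 : ℝ) ≤ eLpNorm h 2 (κ y) ^ (2 : ℝ) := by gcongr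
      _ = ∫⁻ z, ‖h z‖ₑ ^ (2 : ℝ) ∂κ y := by
        simpa using eLpNorm_nnreal_pow_eq_lintegral (f := h) (μ := κ y) (p := 2) two_ne_zero
  refine ⟨(hm.comp_measurable measurable_snd).integral_kernel_prod_right'.aestronglyMeasurable, ?_⟩
  have hh' := hh.2
  rw [eLpNorm_lt_top_iff_lintegral_rpow_enorm_lt_top two_ne_zero ENNReal.ofNat_ne_top,
    ENNReal.toReal_ofNat] at hh' ⊢
  rw [Measure.lintegral_compProd (f := fun p => ‖h p.2‖ₑ ^ (2 : ℝ))
    ((hm.measurable.enorm.pow_const _).comp measurable_snd)] at hh'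
  exact (lintegral_mono jensen).trans_lt hh'

theorem integral_mul_compProd {β γ : Type*} [MeasurableSpace β] [MeasurableSpace γ]
    {μ : Measure β} [SFinite μ] (κ : Kernel β γ) [IsMarkovKernel κ] {F : β → ℂ}
    (hF : MemLp F 2 μ) {h : γ → ℂ} (hh : MemLp (fun p : β × γ => h p.2) 2 (μ ⊗ₘ κ)) :
    ∫ p, F p.1 * h p.2 ∂(μ ⊗ₘ κ) = ∫ y, F y * ∫ z, h z ∂κ y ∂μ := by
  have hF' : MemLp (fun p : β × γ => F p.1) 2 (μ ⊗ₘ κ) :=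
    hF.comp_measurePreserving ⟨measurable_fst, Measure.fst_compProd μ κ⟩
  rw [Measure.integral_compProd (f := fun p => F p.1 * h p.2) (hF'.integrable_mul hh)]
  simp only [integral_const_mul]

section RelativelyIndependentLift

variable {α β Ω : Type*} [MeasurableSpace α] [MeasurableSpace β] [MeasurableSpace Ω]
  [StandardBorelSpace Ω] [Nonempty Ω] {μ : Measure α} [IsProbabilityMeasure μ] {π : α → β}
  {ν : Measure (β × Ω)} [IsProbabilityMeasure ν]

noncomputable def relativelyIndependentLift (μ : Measure α) (hπ : Measurable π)
    (ν : Measure (β × Ω)) [IsFiniteMeasure ν] : Measure (α × Ω) :=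
  μ ⊗ₘ ν.condKernel.comap π hπ

instance (hπ : Measurable π) : IsProbabilityMeasure (relativelyIndependentLift μ hπ ν) := by
  unfold relativelyIndependentLift; infer_instance

theorem relativelyIndependentLift_apply_prod (hπ : Measurable π) {A : Set α} {B : Set Ω}
    (hA : MeasurableSet A) (hB : MeasurableSet B) :
    relativelyIndependentLift μ hπ ν (A ×ˢ B) = ∫⁻ x in A, ν.condKernel (π x) B ∂μ := by
  rw [relativelyIndependentLift, Measure.compProd_apply_prod hA hB]
  rfl

theorem map_prodMap_relativelyIndependentLift (hπ : MeasurePreserving π μ ν.fst) :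
    (relativelyIndependentLift μ hπ.measurable ν).map (Prod.map π id) = ν := by
  refine Measure.ext_prod fun {A B} hA hB => ?_
  rw [Measure.map_apply (hπ.measurable.prodMap measurable_id) (hA.prod hB),
    Set.preimage_prod_map_prod, Set.preimage_id, relativelyIndependentLift_apply_prod _ (hπ.measurable hA) hB,
    hπ.setLIntegral_comp_preimage hA (ν.condKernel.measurable_coe hB),
    ν.setLIntegral_condKernel_eq_measure_prod hA hB]

theorem snd_relativelyIndependentLift (hπ : MeasurePreserving π μ ν.fst) :
    (relativelyIndependentLift μ hπ.measurable ν).snd = ν.snd := by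
  conv_rhs => rw [← map_prodMap_relativelyIndependentLift hπ]
  rw [Measure.snd, Measure.snd,
    Measure.map_map measurable_snd (hπ.measurable.prodMap measurable_id)]
  rfl

theorem measurePreserving_prodMap_relativelyIndependentLift (hπ : MeasurePreserving π μ ν.fst)
    {t : α → α} (ht : MeasurePreserving t μ μ) (s : β ≃ᵐ β) (r : Ω ≃ᵐ Ω)
    (hπt : ∀ᵐ x ∂μ, π (t x) = s (π x)) (hν : ν.map (Prod.map s r) = ν) :
    MeasurePreserving (Prod.map t r) (relativelyIndependentLift μ hπ.measurable ν)
      (relativelyIndependentLift μ hπ.measurable ν) := by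
  have hmeas : Measurable (Prod.map t r) := ht.measurable.prodMap r.measurable
  have hκ : ∀ᵐ x ∂μ, ν.condKernel (s (π x)) = (ν.condKernel (π x)).map r :=
    hπ.quasiMeasurePreserving.ae (ae_condKernel_apply_eq_map s r hν)
  refine ⟨hmeas, Measure.ext_prod fun {A B} hA hB => ?_⟩
  rw [Measure.map_apply hmeas (hA.prod hB), Set.preimage_prod_map_prod,
    relativelyIndependentLift_apply_prod _ (ht.measurable hA) (r.measurable hB),
    relativelyIndependentLift_apply_prod _ hA hB,
    ← lintegral_indicator (ht.measurable hA), ← lintegral_indicator hA,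
    ← ht.lintegral_comp (f := A.indicator fun x => ν.condKernel (π x) B)
      (((ν.condKernel.measurable_coe hB).comp hπ.measurable).indicator hA)]
  refine lintegral_congr_ae ?_
  filter_upwards [hκ, hπt] with x hκx hπx
  rw [← Set.indicator_comp_right t]
  classical
  simp only [Set.indicator_apply, Function.comp_apply, hπx, hκx, Measure.map_apply r.measurable hB]

theorem integral_mul_relativelyIndependentLift (hπ : MeasurePreserving π μ ν.fst) (f : Lp ℂ 2 μ)
    {h : Ω → ℂ} (hm : StronglyMeasurable h) (hh : MemLp h 2 ν.snd) :
    ∫ p, f p.1 * h p.2 ∂relativelyIndependentLift μ hπ.measurable ν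
      = ∫ p, factorCondExp π hπ f p.1 * h p.2 ∂ν := by
  set κ := ν.condKernel
  have hdisint : ν.fst ⊗ₘ κ = ν := ν.disintegrate κ
  have hhν : MemLp (fun p : β × Ω => h p.2) 2 (ν.fst ⊗ₘ κ) := by
    rw [hdisint]
    exact hh.comp_measurePreserving ⟨measurable_snd, rfl⟩
  have hhLift : MemLp (fun p : α × Ω => h p.2) 2 (relativelyIndependentLift μ hπ.measurable ν) :=
    hh.comp_measurePreserving ⟨measurable_snd, snd_relativelyIndependentLift hπ⟩
  have hH := memLp_two_integral_kernel κ hm hhν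
  calc ∫ p, f p.1 * h p.2 ∂relativelyIndependentLift μ hπ.measurable ν
      = ∫ x, f x * ∫ z, h z ∂κ (π x) ∂μ := integral_mul_compProd _ (Lp.memLp f) hhLift
    _ = ∫ x, f x * hH.toLp _ (π x) ∂μ := integral_congr_ae <|
        (hπ.quasiMeasurePreserving.ae hH.coeFn_toLp).mono fun x hx => by simp only [hx]
    _ = ∫ y, factorCondExp π hπ f y * hH.toLp _ y ∂ν.fst :=
        integral_mul_comp_eq_integral_factorCondExp_mul hπ f _
    _ = ∫ y, factorCondExp π hπ f y * ∫ z, h z ∂κ y ∂ν.fst := integral_congr_ae <|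
        hH.coeFn_toLp.mono fun y hy => by simp only [hy]
    _ = ∫ p, factorCondExp π hπ f p.1 * h p.2 ∂ν := by
        rw [← integral_mul_compProd κ (Lp.memLp _) hhν, hdisint]

end RelativelyIndependentLift

def measurableEquivOfAction {G α : Type*} [Group G] [MeasurableSpace α] (T : G → α → α)
    (hT1 : ∀ x, T 1 x = x) (hTmul : ∀ g h x, T (g * h) x = T g (T h x))
    (hTm : ∀ g, Measurable (T g)) (g : G) : α ≃ᵐ α where
  toFun := T g
  invFun := T g⁻¹
  left_inv x := by rw [← hTmul, inv_mul_cancel, hT1]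
  right_inv x := by rw [← hTmul, mul_inv_cancel, hT1]
  measurable_toFun := hTm g
  measurable_invFun := hTm g⁻¹

theorem quasi_disjointness_passes_to_factors_general
    {G : Type*} [Group G]
    {X : Type*} [MeasurableSpace X]
    {Y : Type*} [MeasurableSpace Y]
    {Z : Type*} [MetricSpace Z] [CompactSpace Z] [MeasurableSpace Z] [BorelSpace Z]
    (T : G → X → X)
    (μX : Measure X) (hXprob : IsProbabilityMeasure μX)
    (hTμ : ∀ g, MeasurePreserving (T g) μX μX)
    (S : G → Y → Y) (hS1 : ∀ y, S 1 y = y)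
    (hSmul : ∀ g h y, S (g * h) y = S g (S h y))
    (μY : Measure Y)
    (hSμ : ∀ g, MeasurePreserving (S g) μY μY)
    (R : G → Z → Z) (hR1 : ∀ z, R 1 z = z)
    (hRmul : ∀ g h z, R (g * h) z = R g (R h z))
    (μZ : Measure Z)
    (hRμ : ∀ g, MeasurePreserving (R g) μZ μZ)
    (π : X → Y) (hπ : IsFactorMap T S μX μY π)
    (hXZ : QuasiDisjoint T R μX μZ) :
    QuasiDisjoint S R μY μZ := by
  obtain ⟨hπm, hπmap, hπeq⟩ := hπ
  rintro ν ⟨hν, hνinv, hνfst, hνsnd⟩ hνK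
  change ν.fst = μY at hνfst
  change ν.snd = μZ at hνsnd
  subst hνfst hνsnd
  have : Nonempty Z := (nonempty_of_isProbabilityMeasure ν).map Prod.snd
  have hπmp : MeasurePreserving π μX ν.fst := ⟨hπm, hπmap⟩
  let s := measurableEquivOfAction S hS1 hSmul fun g => (hSμ g).measurable
  let r := measurableEquivOfAction R hR1 hRmul fun g => (hRμ g).measurable
  let lift := relativelyIndependentLift μX hπm ν
  have hjoin : IsJoining T R μX ν.snd lift :=
    ⟨inferInstance, fun g => measurePreserving_prodMap_relativelyIndependentLift hπmp (hTμ g)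
      (s g) (r g) (hπeq g) (hνinv g).map_eq, Measure.fst_compProd _ _,
      snd_relativelyIndependentLift hπmp⟩
  have hlift : ProjectsToKroneckerProduct T R μX ν.snd lift := fun f h hf hh => by
    have hQf : AlmostPeriodic S ν.fst (factorCondExp π hπmp f) :=
      hf.map_of_intertwines hTμ hSμ (factorCondExp π hπmp).continuous
        fun g => factorCondExp_compMeasurePreserving hπmp (hTμ g) (s g) (hSμ g) (hπeq g)
    rw [integral_mul_relativelyIndependentLift hπmp f (Lp.stronglyMeasurable h) (Lp.memLp h),
      hνK _ h hQf hh, integral_factorCondExp]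
  calc ν = lift.map (Prod.map π id) := (map_prodMap_relativelyIndependentLift hπmp).symm
    _ = (μX.prod ν.snd).map (Prod.map π id) := by rw [hXZ lift hjoin hlift]
    _ = ν.fst.prod ν.snd := by
      rw [← Measure.map_prod_map _ _ hπm measurable_id, hπmap, Measure.map_id]

/-- Quasi-disjointness passes to factors: if `Y` is a factor of `X` and `X` is
quasi-disjoint from `Z`, then `Y` is quasi-disjoint from `Z`. -/
theorem quasi_disjointness_passes_to_factors
    {G : Type*} [Group G] [Countable G]
    {X : Type*} [MetricSpace X] [CompactSpace X] [MeasurableSpace X] [BorelSpace X]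
    {Y : Type*} [MetricSpace Y] [CompactSpace Y] [MeasurableSpace Y] [BorelSpace Y]
    {Z : Type*} [MetricSpace Z] [CompactSpace Z] [MeasurableSpace Z] [BorelSpace Z]
    (T : G → X → X) (hT1 : ∀ x, T 1 x = x)
    (hTmul : ∀ g h x, T (g * h) x = T g (T h x))
    (hTcont : ∀ g, Continuous (T g))
    (μX : Measure X) (hXprob : IsProbabilityMeasure μX)
    (hTμ : ∀ g, MeasurePreserving (T g) μX μX)
    (S : G → Y → Y) (hS1 : ∀ y, S 1 y = y)
    (hSmul : ∀ g h y, S (g * h) y = S g (S h y))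
    (hScont : ∀ g, Continuous (S g))
    (μY : Measure Y) (hYprob : IsProbabilityMeasure μY)
    (hSμ : ∀ g, MeasurePreserving (S g) μY μY)
    (R : G → Z → Z) (hR1 : ∀ z, R 1 z = z)
    (hRmul : ∀ g h z, R (g * h) z = R g (R h z))
    (hRcont : ∀ g, Continuous (R g))
    (μZ : Measure Z) (hZprob : IsProbabilityMeasure μZ)
    (hRμ : ∀ g, MeasurePreserving (R g) μZ μZ)
    (π : X → Y) (hπ : IsFactorMap T S μX μY π)
    (hXZ : QuasiDisjoint T R μX μZ) :
    QuasiDisjoint S R μY μZ :=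
  quasi_disjointness_passes_to_factors_general T μX hXprob hTμ S hS1 hSmul μY hSμ R hR1 hRmul μZ hRμ
    π hπ hXZ
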